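/- For real s < 0 and ρ ∈ (0, ∞), the Stieltjes transform of the Marčenko–Pastur distribution satisfies m_ρ(s) = -(1/(2ρs)) * (s + ρ - 1 + sqrt((s + ρ - 1)² - 4ρs)). -/

import Mathlib

open MeasureTheory Real

/-- The Marčenko–Pastur distribution with parameter `ρ ∈ (0, ∞)`: a point mass
`max (1 - ρ⁻¹) 0` at `0` plus the absolutely continuous part with density
`(1/(2πρz)) √((b - z)(z - a))` on `(a, b)`, where `a = (1 - √ρ)²`, `b = (1 + √ρ)²`. -/
noncomputable def mpMeasure (ρ : ℝ) : Measure ℝ :=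
  ENNReal.ofReal (max (1 - ρ⁻¹) 0) • Measure.dirac (0 : ℝ) +
    volume.withDensity (fun z =>
      ENNReal.ofReal
        (if (1 - Real.sqrt ρ) ^ 2 < z ∧ z < (1 + Real.sqrt ρ) ^ 2 then
          Real.sqrt (((1 + Real.sqrt ρ) ^ 2 - z) * (z - (1 - Real.sqrt ρ) ^ 2)) /
            (2 * Real.pi * ρ * z)
        else 0))

/-!
The atom at `0` contributes `max (1 - ρ⁻¹) 0 / (-s)`. On the bulk `(a, b)`, the partial fraction
`1 / (z (z - s)) = s⁻¹ (1 / (z - s) - 1 / z)` reduces the transform to the integrals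
`∫ x in a..b, √((b - x) (x - a)) / (x - t) = π ((a + b) / 2 - t - √((a - t) (b - t)))`
for `t ≤ a`, which follow from the fundamental theorem of calculus with an explicit arcsin
primitive; at the hard edge `t = a` (the case `a = 0`, `ρ = 1`) its last term vanishes.
The contribution `√(a b) = |1 - ρ|` of `t = 0` is exactly what the atom compensates.
-/

open Set

lemma hasDerivAt_arcsin_of_one_sub_sq_eq {u : ℝ → ℝ} {u' x k : ℝ} (hu : HasDerivAt u u' x)
    (hk : 0 < k) (h : 1 - u x ^ 2 = k ^ 2) : HasDerivAt (fun y => arcsin (u y)) (u' / k) x := by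
  have hlt : u x ^ 2 < 1 := by nlinarith
  have h₁ : u x ≠ -1 := by rintro hu; simp [hu] at hlt
  have h₂ : u x ≠ 1 := by rintro hu; simp [hu] at hlt
  refine ((hasDerivAt_arcsin h₁ h₂).comp x hu).congr_deriv ?_
  rw [h, sqrt_sq hk.le]
  ring

section SemicircleKernel

variable {a b t x : ℝ}

lemma hasDerivAt_sqrt_mul_sub (hx : x ∈ Ioo a b) :
    HasDerivAt (fun y => √((b - y) * (y - a)))
      ((a + b - 2 * x) / (2 * √((b - x) * (x - a)))) x := by
  have hQ : (b - x) * (x - a) ≠ 0 := (mul_pos (sub_pos.2 hx.2) (sub_pos.2 hx.1)).ne'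
  have hd : HasDerivAt (fun y => (b - y) * (y - a)) (a + b - 2 * x) x :=
    (((hasDerivAt_id x).const_sub b).mul ((hasDerivAt_id x).sub_const a)).congr_deriv
      (by simp; ring)
  exact hd.sqrt hQ

lemma hasDerivAt_arcsin_chord (hx : x ∈ Ioo a b) :
    HasDerivAt (fun y => arcsin ((2 * y - a - b) / (b - a)))
      (1 / √((b - x) * (x - a))) x := by
  have hab : 0 < b - a := by linarith [hx.1, hx.2]
  have hQ : 0 < (b - x) * (x - a) := mul_pos (sub_pos.2 hx.2) (sub_pos.2 hx.1)
  have hu : HasDerivAt (fun y => (2 * y - a - b) / (b - a)) (2 / (b - a)) x := by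
    simpa using ((((hasDerivAt_id x).const_mul 2).sub_const a).sub_const b).div_const (b - a)
  refine (hasDerivAt_arcsin_of_one_sub_sq_eq hu (k := 2 * √((b - x) * (x - a)) / (b - a))
    (by positivity) ?_).congr_deriv ?_
  · simp only [div_pow, mul_pow, sq_sqrt hQ.le]
    field_simp
    ring
  · field_simp

lemma hasDerivAt_sqrt_mul_arcsin_moebius (ht : t ≤ a) (hx : x ∈ Ioo a b) :
    HasDerivAt (fun y => √((a - t) * (b - t)) *
        arcsin (((b - t) * (y - a) - (a - t) * (b - y)) / ((b - a) * (y - t))))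
      ((a - t) * (b - t) / ((x - t) * √((b - x) * (x - a)))) x := by
  rcases ht.lt_or_eq with ht | rfl
  swap
  · simpa using hasDerivAt_const x (0 : ℝ)
  have hab : 0 < b - a := by linarith [hx.1, hx.2]
  have hxt : 0 < x - t := by linarith [hx.1]
  have hN : 0 < (a - t) * (b - t) := mul_pos (by linarith) (by linarith [hx.1, hx.2])
  have hQ : 0 < (b - x) * (x - a) := mul_pos (sub_pos.2 hx.2) (sub_pos.2 hx.1)
  have hw : HasDerivAt (fun y => ((b - t) * (y - a) - (a - t) * (b - y)) / ((b - a) * (y - t)))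
      (2 * ((a - t) * (b - t)) / ((b - a) * (x - t) ^ 2)) x := by
    refine ((((hasDerivAt_id' x).sub_const a).const_mul (b - t)).sub
      (((hasDerivAt_id' x).const_sub b).const_mul (a - t)) |>.div
      (((hasDerivAt_id' x).sub_const t).const_mul (b - a)) (mul_pos hab hxt).ne').congr_deriv ?_
    simp only [Pi.sub_apply]
    field_simp
    ring
  refine ((hasDerivAt_arcsin_of_one_sub_sq_eq hw
    (k := 2 * √((a - t) * (b - t)) * √((b - x) * (x - a)) / ((b - a) * (x - t)))
    (by positivity) ?_).const_mul (√((a - t) * (b - t)))).congr_deriv ?_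
  · simp only [div_pow, mul_pow, sq_sqrt hN.le, sq_sqrt hQ.le]
    field_simp
    ring
  · field_simp

noncomputable def semicirclePrimitive (a b t x : ℝ) : ℝ :=
  √((b - x) * (x - a)) + ((a + b) / 2 - t) * arcsin ((2 * x - a - b) / (b - a)) -
    √((a - t) * (b - t)) *
      arcsin (((b - t) * (x - a) - (a - t) * (b - x)) / ((b - a) * (x - t)))

lemma hasDerivAt_semicirclePrimitive (ht : t ≤ a) (hx : x ∈ Ioo a b) :
    HasDerivAt (semicirclePrimitive a b t) (√((b - x) * (x - a)) / (x - t)) x := by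
  have hxt : 0 < x - t := by linarith [hx.1]
  have hQ : 0 < (b - x) * (x - a) := mul_pos (sub_pos.2 hx.2) (sub_pos.2 hx.1)
  refine (((hasDerivAt_sqrt_mul_sub hx).add ((hasDerivAt_arcsin_chord hx).const_mul _)).sub
    (hasDerivAt_sqrt_mul_arcsin_moebius ht hx)).congr_deriv ?_
  field_simp
  linear_combination (-2) * sq_sqrt hQ.le

lemma continuousOn_semicirclePrimitive (hab : a < b) (ht : t ≤ a) :
    ContinuousOn (semicirclePrimitive a b t) (Icc a b) := by
  rcases ht.lt_or_eq with ht | rfl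
  · have hden : ∀ x ∈ Icc a b, (b - a) * (x - t) ≠ 0 := fun x hx =>
      (mul_pos (sub_pos.2 hab) (by linarith [hx.1])).ne'
    unfold semicirclePrimitive
    fun_prop (disch := assumption)
  · unfold semicirclePrimitive
    simp only [sub_self, zero_mul, sqrt_zero, sub_zero]
    fun_prop

lemma semicirclePrimitive_right (hab : a < b) (ht : t ≤ a) :
    semicirclePrimitive a b t b = ((a + b) / 2 - t - √((a - t) * (b - t))) * (π / 2) := by
  have hchord : (2 * b - a - b) / (b - a) = 1 := by
    rw [div_eq_one_iff_eq (sub_pos.2 hab).ne']; ring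
  have hmoebius : ((b - t) * (b - a) - (a - t) * (b - b)) / ((b - a) * (b - t)) = 1 := by
    rw [div_eq_one_iff_eq (mul_pos (sub_pos.2 hab) (by linarith)).ne']; ring
  rw [semicirclePrimitive, hchord, hmoebius]
  simp only [sub_self, zero_mul, sqrt_zero, arcsin_one]
  ring

lemma semicirclePrimitive_left (hab : a < b) (ht : t ≤ a) :
    semicirclePrimitive a b t a = -((a + b) / 2 - t - √((a - t) * (b - t))) * (π / 2) := by
  have hchord : (2 * a - a - b) / (b - a) = -1 := by
    rw [div_eq_iff (sub_pos.2 hab).ne']; ring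
  rcases ht.lt_or_eq with ht | rfl
  · have hmoebius : ((b - t) * (a - a) - (a - t) * (b - a)) / ((b - a) * (a - t)) = -1 := by
      rw [div_eq_iff (mul_pos (sub_pos.2 hab) (by linarith)).ne']; ring
    rw [semicirclePrimitive, hchord, hmoebius]
    simp only [sub_self, mul_zero, sqrt_zero, arcsin_neg_one]
    ring
  · simp only [semicirclePrimitive, hchord, sub_self, zero_mul, mul_zero, sqrt_zero,
      arcsin_neg_one]
    ring

lemma integrableOn_sqrt_mul_div_sub (hab : a < b) (ht : t ≤ a) :
    IntegrableOn (fun x => √((b - x) * (x - a)) / (x - t)) (Ioc a b) :=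
  intervalIntegral.integrableOn_deriv_of_nonneg (continuousOn_semicirclePrimitive hab ht)
    (fun _ hx => hasDerivAt_semicirclePrimitive ht hx)
    (fun x hx => div_nonneg (sqrt_nonneg _) (by linarith [hx.1]))

lemma integral_sqrt_mul_div_sub (hab : a < b) (ht : t ≤ a) :
    ∫ x in a..b, √((b - x) * (x - a)) / (x - t) =
      π * ((a + b) / 2 - t - √((a - t) * (b - t))) := by
  rw [intervalIntegral.integral_eq_sub_of_hasDerivAt_of_le hab.le
    (continuousOn_semicirclePrimitive hab ht) (fun _ hx => hasDerivAt_semicirclePrimitive ht hx)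
    ((intervalIntegrable_iff_integrableOn_Ioc_of_le hab.le).2
      (integrableOn_sqrt_mul_div_sub hab ht)),
    semicirclePrimitive_right hab ht, semicirclePrimitive_left hab ht]
  ring

end SemicircleKernel

section DensityOnSet

variable {α : Type*} {s : Set α} {g f : α → ℝ}

lemma toReal_ofReal_indicator_smul (hg : ∀ z ∈ s, 0 ≤ g z) (z : α) :
    (ENNReal.ofReal (s.indicator g z)).toReal • f z = s.indicator (fun z => g z * f z) z := by
  rw [ENNReal.toReal_ofReal (indicator_nonneg hg z), smul_eq_mul, indicator_mul_left]

variable [MeasurableSpace α] {μ : Measure α}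

lemma integrable_withDensity_ofReal_indicator_iff (hs : MeasurableSet s) (hgm : Measurable g)
    (hg : ∀ z ∈ s, 0 ≤ g z) :
    Integrable f (μ.withDensity fun z => ENNReal.ofReal (s.indicator g z)) ↔
      IntegrableOn (fun z => g z * f z) s μ := by
  rw [integrable_withDensity_iff_integrable_smul' (hgm.indicator hs).ennreal_ofReal
    (ae_of_all _ fun _ => ENNReal.ofReal_lt_top)]
  simp only [toReal_ofReal_indicator_smul hg, integrable_indicator_iff hs]

lemma integral_withDensity_ofReal_indicator (hs : MeasurableSet s) (hgm : Measurable g)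
    (hg : ∀ z ∈ s, 0 ≤ g z) :
    ∫ z, f z ∂(μ.withDensity fun z => ENNReal.ofReal (s.indicator g z)) =
      ∫ z in s, g z * f z ∂μ := by
  rw [integral_withDensity_eq_integral_toReal_smul (hgm.indicator hs).ennreal_ofReal
    (ae_of_all _ fun _ => ENNReal.ofReal_lt_top)]
  simp only [toReal_ofReal_indicator_smul hg, integral_indicator hs]

end DensityOnSet

lemma two_mul_mul_max_one_sub_inv {ρ : ℝ} (hρ : 0 < ρ) :
    2 * ρ * max (1 - ρ⁻¹) 0 = |1 - ρ| - (1 - ρ) := by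
  rcases le_total ρ 1 with h | h
  · rw [max_eq_right (by linarith [(one_le_inv₀ hρ).2 h]), abs_of_nonneg (by linarith)]
    ring
  · rw [max_eq_left (by linarith [inv_le_one_of_one_le₀ h]), abs_of_nonpos (by linarith)]
    field_simp
    ring

noncomputable def sqrtDensityMeasure (a b k : ℝ) : Measure ℝ :=
  volume.withDensity fun z =>
    ENNReal.ofReal ((Ioo a b).indicator (fun z => √((b - z) * (z - a)) / (k * z)) z)

lemma mpMeasure_eq_add_sqrtDensityMeasure (ρ : ℝ) :
    mpMeasure ρ = ENNReal.ofReal (max (1 - ρ⁻¹) 0) • Measure.dirac 0 +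
      sqrtDensityMeasure ((1 - √ρ) ^ 2) ((1 + √ρ) ^ 2) (2 * π * ρ) := by
  simp only [mpMeasure, sqrtDensityMeasure, indicator, mem_Ioo]

section SqrtDensityMeasure

variable {a b k s : ℝ}

lemma eqOn_sqrt_div_mul_inv_sub (ha : 0 ≤ a) (hs : s < 0) (hk : k ≠ 0) :
    EqOn (fun z => √((b - z) * (z - a)) / (k * z) * (z - s)⁻¹)
      (fun z => (k * s)⁻¹ *
        (√((b - z) * (z - a)) / (z - s) - √((b - z) * (z - a)) / (z - 0)))
      (Ioo a b) := fun z hz => by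
  have : 0 < z := ha.trans_lt hz.1
  have : 0 < z - s := by linarith
  have : s ≠ 0 := hs.ne
  simp only [sub_zero]
  field_simp
  ring

lemma integrable_inv_sub_sqrtDensityMeasure (ha : 0 ≤ a) (hab : a < b) (hk : 0 < k)
    (hs : s < 0) : Integrable (fun z => (z - s)⁻¹) (sqrtDensityMeasure a b k) := by
  rw [sqrtDensityMeasure, integrable_withDensity_ofReal_indicator_iff measurableSet_Ioo
    (by fun_prop) (fun z hz => by have := ha.trans_lt hz.1; positivity)]
  refine IntegrableOn.congr_fun ?_ (eqOn_sqrt_div_mul_inv_sub ha hs hk.ne').symm measurableSet_Ioo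
  exact IntegrableOn.mono_set (Integrable.const_mul (IntegrableOn.sub
    (integrableOn_sqrt_mul_div_sub hab (hs.le.trans ha))
    (integrableOn_sqrt_mul_div_sub hab ha)) _) Ioo_subset_Ioc_self

lemma integral_inv_sub_sqrtDensityMeasure (ha : 0 ≤ a) (hab : a < b) (hk : 0 < k)
    (hs : s < 0) :
    ∫ z, (z - s)⁻¹ ∂(sqrtDensityMeasure a b k) =
      π / (k * s) * (√(a * b) - s - √((a - s) * (b - s))) := by
  rw [sqrtDensityMeasure, integral_withDensity_ofReal_indicator measurableSet_Ioo
      (by fun_prop) (fun z hz => by have := ha.trans_lt hz.1; positivity),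
    setIntegral_congr_fun measurableSet_Ioo (eqOn_sqrt_div_mul_inv_sub ha hs hk.ne'),
    integral_const_mul, ← integral_Ioc_eq_integral_Ioo,
    integral_sub (integrableOn_sqrt_mul_div_sub hab (hs.le.trans ha))
      (integrableOn_sqrt_mul_div_sub hab ha),
    ← intervalIntegral.integral_of_le hab.le, ← intervalIntegral.integral_of_le hab.le,
    integral_sqrt_mul_div_sub hab (hs.le.trans ha), integral_sqrt_mul_div_sub hab ha]
  simp only [sub_zero]
  field_simp
  ring

end SqrtDensityMeasure

theorem stmt_2 (ρ s : ℝ) (hρ : 0 < ρ) (hs : s < 0) :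
    ∫ z, (z - s)⁻¹ ∂(mpMeasure ρ) =
      -(1 / (2 * ρ * s)) * (s + ρ - 1 + Real.sqrt ((s + ρ - 1) ^ 2 - 4 * ρ * s)) := by
  have hsq : √ρ ^ 2 = ρ := sq_sqrt hρ.le
  have hab : (1 - √ρ) ^ 2 < (1 + √ρ) ^ 2 := by nlinarith [sqrt_pos.2 hρ]
  have hk : 0 < 2 * π * ρ := by positivity
  have hatom : Integrable (fun z : ℝ => (z - s)⁻¹)
      (ENNReal.ofReal (max (1 - ρ⁻¹) 0) • Measure.dirac 0) :=
    (integrable_dirac (by simp)).smul_measure ENNReal.ofReal_ne_top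
  have hprod : (1 - √ρ) ^ 2 * (1 + √ρ) ^ 2 = (1 - ρ) ^ 2 := by
    linear_combination (√ρ ^ 2 + ρ - 2) * hsq
  have hdisc : ((1 - √ρ) ^ 2 - s) * ((1 + √ρ) ^ 2 - s) = (s + ρ - 1) ^ 2 - 4 * ρ * s := by
    linear_combination (√ρ ^ 2 + ρ - 2 - 2 * s) * hsq
  rw [mpMeasure_eq_add_sqrtDensityMeasure, integral_add_measure hatom
      (integrable_inv_sub_sqrtDensityMeasure (sq_nonneg _) hab hk hs),
    integral_smul_measure, integral_dirac,
    integral_inv_sub_sqrtDensityMeasure (sq_nonneg _) hab hk hs, hprod, hdisc, sqrt_sq_eq_abs,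
    ENNReal.toReal_ofReal (le_max_right _ _), smul_eq_mul]
  have hmass := two_mul_mul_max_one_sub_inv hρ
  generalize max (1 - ρ⁻¹) 0 = c at hmass ⊢
  have : s ≠ 0 := hs.ne
  field_simp
  linear_combination s * hmass
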